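/- Let A=(a_ij) be an indecomposable, doubly-laced symmetrizable GCM satisfying condition (★), and suppose X_sh={p} is a single index, or X_sh={p,q} with a_pq=a_qp=−1 (type A_1 or A_2). If β_1,β_2∈W·{α_s : s∈X_sh} are real roots with ⟨β_1∨,β_2⟩=⟨β_2∨,β_1⟩=0 (a pair of type A_1×A_1), then β_2−β_1 is a real root of A. Consequently there is no π-system of type A_1×A_1 in A contained wholly in the shortest real roots. -/

import Mathlib

/-- An integer matrix is a generalized Cartan matrix. -/
def IsGCM {n : ℕ} (A : Matrix (Fin n) (Fin n) ℤ) : Prop :=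
  (∀ i, A i i = 2) ∧ (∀ i j, i ≠ j → A i j ≤ 0) ∧ (∀ i j, A i j = 0 → A j i = 0)

/-- `d` is a symmetrizer of `A`: positive rationals with `dᵢ aᵢⱼ = dⱼ aⱼᵢ`. -/
def IsSymmetrizer {n : ℕ} (A : Matrix (Fin n) (Fin n) ℤ) (d : Fin n → ℚ) : Prop :=
  (∀ i, 0 < d i) ∧ ∀ i j, d i * A i j = d j * A j i

/-- The pairing `⟨γ∨, β⟩` between the coroot lattice and the root lattice:
in coordinates (γ in the coroot basis, β in the root basis) it is `∑ γᵢ aᵢⱼ βⱼ`,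
so that `⟨αᵢ∨, αⱼ⟩ = aᵢⱼ`. -/
def pairing {n : ℕ} (A : Matrix (Fin n) (Fin n) ℤ) (y x : Fin n → ℤ) : ℤ :=
  ∑ i, ∑ j, y i * A i j * x j

/-- Simple reflection `s_k` acting on the root lattice: `s_k x = x − ⟨α_k∨, x⟩ α_k`. -/
def sRoot {n : ℕ} (A : Matrix (Fin n) (Fin n) ℤ) (k : Fin n) (x : Fin n → ℤ) : Fin n → ℤ :=
  fun i => x i - (if i = k then ∑ j, A k j * x j else 0)

/-- Simple reflection `s_k` acting on the coroot lattice: `s_k(αⱼ∨) = αⱼ∨ − aⱼₖ α_k∨`. -/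
def sCoroot {n : ℕ} (A : Matrix (Fin n) (Fin n) ℤ) (k : Fin n) (y : Fin n → ℤ) : Fin n → ℤ :=
  fun i => y i - (if i = k then ∑ j, y j * A j k else 0)

/-- Action on the root lattice of a Weyl group element given as a word in simple reflections. -/
def actRoot {n : ℕ} (A : Matrix (Fin n) (Fin n) ℤ) (w : List (Fin n)) (x : Fin n → ℤ) :
    Fin n → ℤ :=
  w.foldr (sRoot A) x

/-- Action on the coroot lattice of a Weyl group element given as a word in simple reflections. -/
def actCoroot {n : ℕ} (A : Matrix (Fin n) (Fin n) ℤ) (w : List (Fin n)) (y : Fin n → ℤ) :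
    Fin n → ℤ :=
  w.foldr (sCoroot A) y

/-- The invariant symmetric bilinear form on `Q ⊗ ℚ` determined by a symmetrizer `d`:
`(αᵢ, αⱼ) = dᵢ aᵢⱼ`. -/
def formQ {n : ℕ} (A : Matrix (Fin n) (Fin n) ℤ) (d : Fin n → ℚ) (x y : Fin n → ℤ) : ℚ :=
  ∑ i, ∑ j, d i * (A i j : ℚ) * (x i : ℚ) * (y j : ℚ)

/-!
Write `β₁ = w α_r` and `y = w⁻¹ β₂`, so that `⟨α_r∨, y⟩ = ⟨β₁∨, β₂⟩ = 0` and
`β₂ - β₁ = w (y - α_r)`; it suffices that `δ = y - α_r` is a real root. Indecomposability and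
double lacing make every `d_j` equal to `2^m d_p`, so `(δ, δ) = 4 d_p` and (★) applies to `δ` as
soon as its short coordinates are even. Entries `a_kj` with `k` short and `j` long are even, so
every simple reflection preserves "all short coordinates even"; hence `y`, like `α_{r₂}`, has an
odd short coordinate. In type `A₁` this is `y_p`. In type `A₂` with short indices `r, r'`, the
equation `⟨α_r∨, y⟩ = 0` read mod 2 makes `y_{r'}` even, so again `y_r` is the odd one.
-/

open Matrix

section RootLattice

variable {n : ℕ} (A : Matrix (Fin n) (Fin n) ℤ)

lemma pairing_eq_dotProduct (y x : Fin n → ℤ) : pairing A y x = y ⬝ᵥ (A *ᵥ x) := by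
  simp [pairing, dotProduct, mulVec, Finset.mul_sum, mul_assoc]

lemma pairing_single_one_left (k : Fin n) (x : Fin n → ℤ) :
    pairing A (Pi.single k 1) x = (A *ᵥ x) k := by
  rw [pairing_eq_dotProduct, single_dotProduct, one_mul]

lemma sRoot_eq (k : Fin n) (x : Fin n → ℤ) : sRoot A k x = x - Pi.single k ((A *ᵥ x) k) := by
  funext i; by_cases h : i = k <;> simp [sRoot, h, mulVec, dotProduct]

lemma sCoroot_eq (k : Fin n) (y : Fin n → ℤ) :
    sCoroot A k y = y - Pi.single k ((y ᵥ* A) k) := by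
  funext i; by_cases h : i = k <;> simp [sCoroot, h, vecMul, dotProduct]

variable {A}

lemma mulVec_single_apply_self {k : Fin n} (hk : A k k = 2) (c : ℤ) :
    (A *ᵥ Pi.single k c) k = 2 * c := by
  simp [mulVec_single, hk]

lemma sRoot_sRoot {k : Fin n} (hk : A k k = 2) (x : Fin n → ℤ) : sRoot A k (sRoot A k x) = x := by
  rw [sRoot_eq A k (sRoot A k x), sRoot_eq, mulVec_sub, Pi.sub_apply, mulVec_single_apply_self hk,
    sub_sub, ← Pi.single_add]
  ring_nf
  simp

lemma sRoot_sub (k : Fin n) (x y : Fin n → ℤ) : sRoot A k (x - y) = sRoot A k x - sRoot A k y := by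
  simp only [sRoot_eq, mulVec_sub, Pi.sub_apply, Pi.single_sub]
  abel

lemma pairing_sCoroot_sRoot {k : Fin n} (hk : A k k = 2) (y x : Fin n → ℤ) :
    pairing A (sCoroot A k y) (sRoot A k x) = pairing A y x := by
  have hy : y ⬝ᵥ (A *ᵥ Pi.single k ((A *ᵥ x) k)) = (y ᵥ* A) k * (A *ᵥ x) k := by
    rw [dotProduct_mulVec, dotProduct_single]
  simp only [pairing_eq_dotProduct, sRoot_eq, sCoroot_eq, mulVec_sub, sub_dotProduct,
    dotProduct_sub, single_dotProduct, hy, mulVec_single_apply_self hk]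
  ring

end RootLattice

section InvariantForm

variable {n : ℕ} (A : Matrix (Fin n) (Fin n) ℤ) (d : Fin n → ℚ)

lemma formQ_eq_sum (x y : Fin n → ℤ) :
    formQ A d x y = ∑ i, d i * x i * ((A *ᵥ y) i : ℚ) := by
  simp only [formQ, mulVec, dotProduct, Int.cast_sum, Int.cast_mul, Finset.mul_sum]
  exact Finset.sum_congr rfl fun i _ => Finset.sum_congr rfl fun j _ => by ring

lemma formQ_sub_left (x x' y : Fin n → ℤ) :
    formQ A d (x - x') y = formQ A d x y - formQ A d x' y := by
  simp only [formQ_eq_sum, Pi.sub_apply, Int.cast_sub, ← Finset.sum_sub_distrib]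
  exact Finset.sum_congr rfl fun i _ => by ring

lemma formQ_sub_right (x y y' : Fin n → ℤ) :
    formQ A d x (y - y') = formQ A d x y - formQ A d x y' := by
  simp only [formQ_eq_sum, mulVec_sub, Pi.sub_apply, Int.cast_sub, ← Finset.sum_sub_distrib]
  exact Finset.sum_congr rfl fun i _ => by ring

lemma formQ_single_left (k : Fin n) (c : ℤ) (y : Fin n → ℤ) :
    formQ A d (Pi.single k c) y = d k * c * (A *ᵥ y) k := by
  rw [formQ_eq_sum, Finset.sum_eq_single k (fun i _ hi => by simp [hi]) (by simp)]
  simp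

variable {A d}

lemma formQ_comm (hsym : ∀ i j, d i * A i j = d j * A j i) (x y : Fin n → ℤ) :
    formQ A d x y = formQ A d y x := by
  unfold formQ
  rw [Finset.sum_comm]
  refine Finset.sum_congr rfl fun i _ => Finset.sum_congr rfl fun j _ => ?_
  linear_combination ((x j : ℚ) * (y i : ℚ)) * hsym j i

lemma formQ_single_right (hsym : ∀ i j, d i * A i j = d j * A j i) (x : Fin n → ℤ) (k : Fin n)
    (c : ℤ) :
    formQ A d x (Pi.single k c) = d k * c * (A *ᵥ x) k := by
  rw [formQ_comm hsym, formQ_single_left]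

lemma formQ_sRoot (hsym : ∀ i j, d i * A i j = d j * A j i) {k : Fin n} (hk : A k k = 2)
    (x y : Fin n → ℤ) :
    formQ A d (sRoot A k x) (sRoot A k y) = formQ A d x y := by
  simp only [sRoot_eq, formQ_sub_left, formQ_sub_right, formQ_single_left, formQ_single_right hsym,
    mulVec_sub, Pi.sub_apply, mulVec_single_apply_self hk]
  push_cast
  ring

lemma formQ_sub_single_one (hsym : ∀ i j, d i * A i j = d j * A j i) {k : Fin n} (hk : A k k = 2)
    (y : Fin n → ℤ) :
    formQ A d (y - Pi.single k 1) (y - Pi.single k 1)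
      = formQ A d y y - 2 * d k * (A *ᵥ y) k + 2 * d k := by
  simp only [formQ_sub_left, formQ_sub_right, formQ_single_left, formQ_single_right hsym,
    mulVec_sub, Pi.sub_apply, mulVec_single_apply_self hk]
  push_cast
  ring

end InvariantForm

def IsRealRoot {n : ℕ} (A : Matrix (Fin n) (Fin n) ℤ) (γ : Fin n → ℤ) : Prop :=
  ∃ (w : List (Fin n)) (s : Fin n), γ = actRoot A w (Pi.single s 1)

section WeylGroup

variable {n : ℕ} {A : Matrix (Fin n) (Fin n) ℤ}

lemma actRoot_append (v w : List (Fin n)) (x : Fin n → ℤ) :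
    actRoot A (v ++ w) x = actRoot A v (actRoot A w x) :=
  List.foldr_append

lemma actRoot_sub (w : List (Fin n)) (x y : Fin n → ℤ) :
    actRoot A w (x - y) = actRoot A w x - actRoot A w y := by
  induction w with
  | nil => rfl
  | cons k w ih => exact (congrArg (sRoot A k) ih).trans (sRoot_sub k _ _)

lemma actRoot_actRoot_reverse (hdiag : ∀ k, A k k = 2) (w : List (Fin n)) (x : Fin n → ℤ) :
    actRoot A w (actRoot A w.reverse x) = x := by
  induction w generalizing x with
  | nil => rfl
  | cons k w ih =>
    rw [List.reverse_cons, actRoot_append]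
    exact (congrArg (sRoot A k) (ih _)).trans (sRoot_sRoot (hdiag k) x)

lemma formQ_actRoot {d : Fin n → ℚ} (hsym : ∀ i j, d i * A i j = d j * A j i)
    (hdiag : ∀ k, A k k = 2) (w : List (Fin n)) (x y : Fin n → ℤ) :
    formQ A d (actRoot A w x) (actRoot A w y) = formQ A d x y := by
  induction w with
  | nil => rfl
  | cons k w ih => exact (formQ_sRoot hsym (hdiag k) _ _).trans ih

lemma pairing_actCoroot_actRoot (hdiag : ∀ k, A k k = 2) (w : List (Fin n)) (y x : Fin n → ℤ) :
    pairing A (actCoroot A w y) (actRoot A w x) = pairing A y x := by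
  induction w with
  | nil => rfl
  | cons k w ih => exact (pairing_sCoroot_sRoot (hdiag k) _ _).trans ih

lemma IsRealRoot.actRoot {γ : Fin n → ℤ} (hγ : IsRealRoot A γ) (v : List (Fin n)) :
    IsRealRoot A (actRoot A v γ) := by
  obtain ⟨w, s, rfl⟩ := hγ
  exact ⟨v ++ w, s, (actRoot_append v w _).symm⟩

end WeylGroup

section Symmetrizer

variable {n : ℕ} {A : Matrix (Fin n) (Fin n) ℤ} {d : Fin n → ℚ}

lemma neg_pair_of_mul_le_two {a b : ℤ} (ha : a ≤ -1) (hb : b ≤ -1) (hab : a * b ≤ 2) :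
    (a = -1 ∧ b = -1) ∨ (a = -1 ∧ b = -2) ∨ (a = -2 ∧ b = -1) := by
  have : -2 ≤ a := by nlinarith
  have : -2 ≤ b := by nlinarith
  interval_cases a <;> interval_cases b <;> simp_all

lemma symmetrizer_adjacent_ratio (hA : IsGCM A) (hsym : ∀ i j, d i * A i j = d j * A j i)
    {i j : Fin n} (hij : i ≠ j) (hAij : A i j ≠ 0) (hprod : A i j * A j i ≤ 2) :
    d j = d i ∨ d j = 2 * d i ∨ d i = 2 * d j := by
  have hAji : A j i ≠ 0 := fun h => hAij (hA.2.2 j i h)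
  have := hA.2.1 i j hij
  have := hA.2.1 j i hij.symm
  have hsym := hsym i j
  rcases neg_pair_of_mul_le_two (by omega) (by omega) hprod with ⟨h₁, h₂⟩ | ⟨h₁, h₂⟩ | ⟨h₁, h₂⟩ <;>
    rw [h₁, h₂] at hsym <;> push_cast at hsym
  · exact Or.inl (by linarith)
  · exact Or.inr (Or.inr (by linarith))
  · exact Or.inr (Or.inl (by linarith))

lemma exists_pow_two_mul_of_indecomposable (hA : IsGCM A) (hd : IsSymmetrizer A d)
    (hind : ¬ ∃ I : Set (Fin n), I.Nonempty ∧ Iᶜ.Nonempty ∧ ∀ i ∈ I, ∀ j ∈ Iᶜ, A i j = 0)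
    (hlaced : ∀ i j, i ≠ j → A i j * A j i ≤ 2) {p : Fin n} (hp : ∀ k, d p ≤ d k) (j : Fin n) :
    ∃ m : ℕ, d j = 2 ^ m * d p := by
  by_contra hj
  apply hind
  refine ⟨{j | ∃ m : ℕ, d j = 2 ^ m * d p}, ⟨p, 0, by simp⟩, ⟨j, hj⟩, ?_⟩
  rintro i ⟨m, hm⟩ k hk
  by_contra hAik
  have hik : i ≠ k := by rintro rfl; exact hk ⟨m, hm⟩
  apply hk
  rcases symmetrizer_adjacent_ratio hA hd.2 hik hAik (hlaced i k hik) with h | h | h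
  · exact ⟨m, by rw [h, hm]⟩
  · exact ⟨m + 1, by rw [h, hm, pow_succ]; ring⟩
  · rcases m with _ | m
    · have := hp k
      have := hd.1 k
      linarith
    · exact ⟨m, by rw [pow_succ] at hm; linarith⟩

lemma even_of_eq_pow_two_succ_mul (hd : IsSymmetrizer A d) {i j : Fin n} {m : ℕ}
    (h : d j = 2 ^ (m + 1) * d i) : Even (A i j) := by
  have hsym := hd.2 i j
  rw [h, mul_comm (2 ^ (m + 1) : ℚ), mul_assoc] at hsym
  have : A i j = 2 ^ (m + 1) * A j i := by exact_mod_cast mul_left_cancel₀ (hd.1 i).ne' hsym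
  exact ⟨2 ^ m * A j i, by rw [this, pow_succ]; ring⟩

end Symmetrizer

section Parity

variable {n : ℕ} {A : Matrix (Fin n) (Fin n) ℤ} {S : Set (Fin n)}

lemma even_mulVec_apply (hS : ∀ k ∈ S, ∀ j ∉ S, Even (A k j)) {z : Fin n → ℤ}
    (hz : ∀ s ∈ S, Even (z s)) {k : Fin n} (hk : k ∈ S) : Even ((A *ᵥ z) k) := by
  change Even (∑ j, A k j * z j)
  refine even_iff_two_dvd.2 (Finset.dvd_sum fun j _ => even_iff_two_dvd.1 ?_)
  by_cases hj : j ∈ S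
  · exact (hz j hj).mul_left _
  · exact (hS k hk j hj).mul_right _

lemma even_sRoot (hS : ∀ k ∈ S, ∀ j ∉ S, Even (A k j)) {z : Fin n → ℤ}
    (hz : ∀ s ∈ S, Even (z s)) (k : Fin n) : ∀ s ∈ S, Even (sRoot A k z s) := by
  intro s hs
  rw [sRoot_eq]
  by_cases hsk : s = k
  · subst hsk
    simpa using (hz s hs).sub (even_mulVec_apply hS hz hs)
  · simpa [hsk] using hz s hs

lemma even_actRoot (hS : ∀ k ∈ S, ∀ j ∉ S, Even (A k j)) {z : Fin n → ℤ}
    (hz : ∀ s ∈ S, Even (z s)) (w : List (Fin n)) : ∀ s ∈ S, Even (actRoot A w z s) := by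
  induction w with
  | nil => exact hz
  | cons k w ih => exact even_sRoot hS ih k

lemma exists_odd_actRoot (hdiag : ∀ k, A k k = 2) (hS : ∀ k ∈ S, ∀ j ∉ S, Even (A k j))
    {x : Fin n → ℤ} (hx : ∃ s ∈ S, Odd (x s)) (w : List (Fin n)) :
    ∃ s ∈ S, Odd (actRoot A w x s) := by
  by_contra! h
  obtain ⟨s, hs, hodd⟩ := hx
  have hx := actRoot_actRoot_reverse hdiag w.reverse x
  rw [List.reverse_reverse] at hx
  have := even_actRoot hS (fun s hs => Int.not_odd_iff_even.1 (h s hs)) w.reverse s hs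
  rw [hx] at this
  exact Int.not_even_iff_odd.2 hodd this

lemma even_of_even_mulVec_apply {r r' : Fin n} (hodd : Odd (A r r'))
    (heven : ∀ j, j ≠ r' → Even (A r j)) {y : Fin n → ℤ} (hy : Even ((A *ᵥ y) r)) :
    Even (y r') := by
  have hrest : Even (∑ j ∈ Finset.univ.erase r', A r j * y j) :=
    even_iff_two_dvd.2 (Finset.dvd_sum fun j hj =>
      even_iff_two_dvd.1 ((heven j (Finset.ne_of_mem_erase hj)).mul_right _))
  change Even (∑ j, A r j * y j) at hy
  rw [← Finset.add_sum_erase _ _ (Finset.mem_univ r')] at hy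
  exact (Int.even_mul.1 ((Int.even_add.1 hy).2 hrest)).resolve_left (Int.not_even_iff_odd.2 hodd)

lemma even_sub_single {r : Fin n} {y : Fin n → ℤ} (hy : ∃ s ∈ S, Odd (y s))
    (hS : ∀ s ∈ S, s = r ∨ Even (y s)) : ∀ s ∈ S, Even ((y - Pi.single r 1 : Fin n → ℤ) s) := by
  have hyr : Odd (y r) := by
    obtain ⟨t, ht, hyt⟩ := hy
    rcases hS t ht with rfl | hyt'
    · exact hyt
    · exact absurd hyt' (Int.not_even_iff_odd.2 hyt)
  intro s hs
  by_cases hsr : s = r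
  · subst hsr
    simpa using hyr.sub_odd odd_one
  · simpa [hsr] using (hS s hs).resolve_left hsr

end Parity

section ShortRoots

variable {n : ℕ} {A : Matrix (Fin n) (Fin n) ℤ} {d : Fin n → ℚ} {p : Fin n}

lemma eq_or_exists_pow_two_succ_mul (hA : IsGCM A) (hd : IsSymmetrizer A d)
    (hind : ¬ ∃ I : Set (Fin n), I.Nonempty ∧ Iᶜ.Nonempty ∧ ∀ i ∈ I, ∀ j ∈ Iᶜ, A i j = 0)
    (hlaced : ∀ i j, i ≠ j → A i j * A j i ≤ 2) (hp : ∀ k, d p ≤ d k) (j : Fin n) :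
    d j = d p ∨ ∃ m : ℕ, d j = 2 ^ (m + 1) * d p := by
  obtain ⟨_ | m, hm⟩ := exists_pow_two_mul_of_indecomposable hA hd hind hlaced hp j
  · exact Or.inl (by simpa using hm)
  · exact Or.inr ⟨m, hm⟩

lemma even_entry_of_short_of_long (hd : IsSymmetrizer A d)
    (hpow : ∀ j, d j = d p ∨ ∃ m : ℕ, d j = 2 ^ (m + 1) * d p) :
    ∀ k ∈ {j | d j = d p}, ∀ j ∉ {j | d j = d p}, Even (A k j) := by
  intro k hk j hj
  obtain ⟨m, hm⟩ := (hpow j).resolve_left hj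
  exact even_of_eq_pow_two_succ_mul hd (m := m) (by rw [hm, hk])

lemma even_apply_of_A2 {S : Set (Fin n)} (hdiag : ∀ k, A k k = 2)
    (hS : ∀ k ∈ S, ∀ j ∉ S, Even (A k j)) {r r' : Fin n} (hrr' : A r r' = -1)
    (hSrr' : ∀ i, i ∈ S ↔ i = r ∨ i = r') {y : Fin n → ℤ} (hy : (A *ᵥ y) r = 0) :
    Even (y r') := by
  refine even_of_even_mulVec_apply (A := A) (r := r) (by rw [hrr']; decide) (fun j hj => ?_)
    (by rw [hy]; exact Even.zero)
  by_cases hjS : j ∈ S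
  · rcases (hSrr' j).1 hjS with rfl | rfl
    · rw [hdiag]; exact even_two
    · exact absurd rfl hj
  · exact hS r ((hSrr' r).2 (Or.inl rfl)) j hjS

lemma forall_even_sub_single {S : Set (Fin n)} {q : Fin n} (hdiag : ∀ k, A k k = 2)
    (hS : ∀ k ∈ S, ∀ j ∉ S, Even (A k j))
    (hsh : (∀ i, i ∈ S ↔ i = p) ∨ (A p q = -1 ∧ A q p = -1 ∧ ∀ i, i ∈ S ↔ i = p ∨ i = q))
    {r : Fin n} (hr : r ∈ S) {y : Fin n → ℤ} (hy : ∃ s ∈ S, Odd (y s)) (hAy : (A *ᵥ y) r = 0) :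
    ∀ s ∈ S, Even ((y - Pi.single r 1 : Fin n → ℤ) s) := by
  refine even_sub_single hy fun s hs => ?_
  rcases hsh with hS₁ | ⟨hpq, hqp, hS₂⟩
  · exact Or.inl (((hS₁ s).1 hs).trans ((hS₁ r).1 hr).symm)
  · rcases (hS₂ r).1 hr with rfl | rfl <;> rcases (hS₂ s).1 hs with rfl | rfl
    · exact Or.inl rfl
    · exact Or.inr (even_apply_of_A2 hdiag hS hpq hS₂ hAy)
    · exact Or.inr (even_apply_of_A2 hdiag hS hqp (fun i => (hS₂ i).trans or_comm) hAy)
    · exact Or.inl rfl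

lemma isRealRoot_of_star
    (hstar : ∀ γ : Fin n → ℤ, γ ≠ 0 → 0 < formQ A d γ γ →
      (∀ j, ∃ c : ℤ, (γ j : ℚ) * formQ A d (Pi.single j 1) (Pi.single j 1)
          = (c : ℚ) * formQ A d γ γ) → IsRealRoot A γ)
    (hdiag : ∀ k, A k k = 2) (hdp : 0 < d p)
    (hpow : ∀ j, d j = d p ∨ ∃ m : ℕ, d j = 2 ^ (m + 1) * d p) {δ : Fin n → ℤ}
    (hδ : formQ A d δ δ = 4 * d p) (heven : ∀ j, d j = d p → Even (δ j)) : IsRealRoot A δ := by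
  have hpos : 0 < formQ A d δ δ := by rw [hδ]; positivity
  refine hstar δ (by rintro rfl; simp [formQ] at hpos) hpos fun j => ?_
  rw [formQ_single_left, mulVec_single_apply_self (hdiag j), hδ]
  rcases hpow j with h | ⟨m, h⟩
  · obtain ⟨c, hc⟩ := heven j h
    exact ⟨c, by rw [hc, h]; push_cast; ring⟩
  · exact ⟨δ j * 2 ^ m, by rw [h]; push_cast; ring⟩

end ShortRoots

theorem isRealRoot_sub_of_pairing_eq_zero {n : ℕ} {A : Matrix (Fin n) (Fin n) ℤ} {d : Fin n → ℚ}
    {p q : Fin n} (hdiag : ∀ k, A k k = 2) (hd : IsSymmetrizer A d)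
    (hstar : ∀ γ : Fin n → ℤ, γ ≠ 0 → 0 < formQ A d γ γ →
      (∀ j, ∃ c : ℤ, (γ j : ℚ) * formQ A d (Pi.single j 1) (Pi.single j 1)
          = (c : ℚ) * formQ A d γ γ) → IsRealRoot A γ)
    (hpow : ∀ j, d j = d p ∨ ∃ m : ℕ, d j = 2 ^ (m + 1) * d p)
    (hsh : (∀ i, d i = d p ↔ i = p) ∨ (A p q = -1 ∧ A q p = -1 ∧ ∀ i, d i = d p ↔ i = p ∨ i = q))
    {w₁ w₂ : List (Fin n)} {r₁ r₂ : Fin n} (hr₁ : d r₁ = d p) (hr₂ : d r₂ = d p)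
    (h₁₂ : pairing A (actCoroot A w₁ (Pi.single r₁ 1)) (actRoot A w₂ (Pi.single r₂ 1)) = 0) :
    IsRealRoot A (actRoot A w₂ (Pi.single r₂ 1) - actRoot A w₁ (Pi.single r₁ 1)) := by
  have hS := even_entry_of_short_of_long hd hpow
  set y := actRoot A w₁.reverse (actRoot A w₂ (Pi.single r₂ 1))
  have hy : actRoot A w₁ y = actRoot A w₂ (Pi.single r₂ 1) := actRoot_actRoot_reverse hdiag w₁ _
  have hAy : (A *ᵥ y) r₁ = 0 := by
    rwa [← pairing_single_one_left, ← pairing_actCoroot_actRoot hdiag w₁, hy]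
  have hyy : formQ A d y y = 2 * d p := by
    rw [← formQ_actRoot hd.2 hdiag w₁, hy, formQ_actRoot hd.2 hdiag, formQ_single_left,
      mulVec_single_apply_self (hdiag r₂), hr₂]
    push_cast
    ring
  have hodd : ∃ s ∈ {j | d j = d p}, Odd (y s) :=
    exists_odd_actRoot hdiag hS (exists_odd_actRoot hdiag hS ⟨r₂, hr₂, by simp⟩ w₂) w₁.reverse
  have hδ : IsRealRoot A (y - Pi.single r₁ 1) :=
    isRealRoot_of_star hstar hdiag (hd.1 p) hpow
      (by rw [formQ_sub_single_one hd.2 (hdiag r₁), hyy, hAy, hr₁]; push_cast; ring)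
      (forall_even_sub_single hdiag hS hsh hr₁ hodd hAy)
  rw [← hy, ← actRoot_sub]
  exact hδ.actRoot w₁

theorem A1xA1_short_diff_is_root_doubly_general {n : ℕ} (A : Matrix (Fin n) (Fin n) ℤ)
    (hA : IsGCM A) (d : Fin n → ℚ) (hd : IsSymmetrizer A d)
    (hind : ¬ ∃ I : Set (Fin n), I.Nonempty ∧ Iᶜ.Nonempty ∧
      ∀ i ∈ I, ∀ j ∈ Iᶜ, A i j = 0)
    (hlaced : ∀ i j, i ≠ j → A i j * A j i = 0 ∨ A i j * A j i = 1 ∨ A i j * A j i = 2)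
    (hstar : ∀ γ : Fin n → ℤ, γ ≠ 0 → 0 < formQ A d γ γ →
      (∀ j, ∃ c : ℤ, (γ j : ℚ) * formQ A d (Pi.single j 1) (Pi.single j 1)
          = (c : ℚ) * formQ A d γ γ) →
      ∃ (w : List (Fin n)) (q : Fin n), γ = actRoot A w (Pi.single q 1))
    (p q : Fin n)
    (hsh : (∀ i, (∀ k, d i ≤ d k) ↔ i = p) ∨
      (p ≠ q ∧ A p q = -1 ∧ A q p = -1 ∧ (∀ i, (∀ k, d i ≤ d k) ↔ (i = p ∨ i = q)))) :
    (∀ (w₁ w₂ : List (Fin n)) (r₁ r₂ : Fin n),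
      (∀ k, d r₁ ≤ d k) → (∀ k, d r₂ ≤ d k) →
      pairing A (actCoroot A w₁ (Pi.single r₁ 1)) (actRoot A w₂ (Pi.single r₂ 1)) = 0 →
      pairing A (actCoroot A w₂ (Pi.single r₂ 1)) (actRoot A w₁ (Pi.single r₁ 1)) = 0 →
      ∃ (w : List (Fin n)) (s : Fin n),
        actRoot A w₂ (Pi.single r₂ 1) - actRoot A w₁ (Pi.single r₁ 1)
          = actRoot A w (Pi.single s 1))
    ∧
    ¬ ∃ (w₁ w₂ : List (Fin n)) (r₁ r₂ : Fin n),
      (∀ k, d r₁ ≤ d k) ∧ (∀ k, d r₂ ≤ d k) ∧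
      pairing A (actCoroot A w₁ (Pi.single r₁ 1)) (actRoot A w₂ (Pi.single r₂ 1)) = 0 ∧
      pairing A (actCoroot A w₂ (Pi.single r₂ 1)) (actRoot A w₁ (Pi.single r₁ 1)) = 0 ∧
      ¬ ∃ (w : List (Fin n)) (s : Fin n),
        actRoot A w₂ (Pi.single r₂ 1) - actRoot A w₁ (Pi.single r₁ 1)
          = actRoot A w (Pi.single s 1) := by
  have hp : ∀ k, d p ≤ d k := by
    rcases hsh with h | h
    exacts [(h p).2 rfl, (h.2.2.2 p).2 (Or.inl rfl)]
  have hshort : ∀ i, (∀ k, d i ≤ d k) ↔ d i = d p :=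
    fun i => ⟨fun h => le_antisymm (h p) (hp i), fun h k => h ▸ hp k⟩
  simp only [hshort] at hsh ⊢
  have hpow := eq_or_exists_pow_two_succ_mul hA hd hind
    (fun i j hij => by rcases hlaced i j hij with h | h | h <;> omega) hp
  have main := fun w₁ w₂ r₁ r₂ (hr₁ : d r₁ = d p) (hr₂ : d r₂ = d p) h₁₂ =>
    isRealRoot_sub_of_pairing_eq_zero (w₁ := w₁) (w₂ := w₂) hA.1 hd hstar hpow
      (hsh.imp_right And.right) hr₁ hr₂ h₁₂
  exact ⟨fun w₁ w₂ r₁ r₂ hr₁ hr₂ h₁₂ _ => main w₁ w₂ r₁ r₂ hr₁ hr₂ h₁₂,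
    fun ⟨w₁, w₂, r₁, r₂, hr₁, hr₂, h₁₂, _, hne⟩ => hne (main w₁ w₂ r₁ r₂ hr₁ hr₂ h₁₂)⟩

/-- Let `A` be an indecomposable, doubly-laced symmetrizable GCM satisfying
condition (★), whose set of short simple roots `X_sh = {i : dᵢ minimal}` is `{p}` (type
`A₁`) or `{p, q}` of type `A₂`. If `β₁, β₂ ∈ W·{α_s : s ∈ X_sh}` satisfy
`⟨β₁∨,β₂⟩ = ⟨β₂∨,β₁⟩ = 0` (type `A₁ × A₁`), then `β₂ − β₁` is a real root; consequently
there is no π-system of type `A₁ × A₁` contained wholly in the shortest real roots. -/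
theorem A1xA1_short_diff_is_root_doubly {n : ℕ} (A : Matrix (Fin n) (Fin n) ℤ)
    (hA : IsGCM A) (d : Fin n → ℚ) (hd : IsSymmetrizer A d)
    (hind : ¬ ∃ I : Set (Fin n), I.Nonempty ∧ Iᶜ.Nonempty ∧
      ∀ i ∈ I, ∀ j ∈ Iᶜ, A i j = 0)
    (hlaced : ∀ i j, i ≠ j → A i j * A j i = 0 ∨ A i j * A j i = 1 ∨ A i j * A j i = 2)
    (hattained : ∃ i j, i ≠ j ∧ A i j * A j i = 2)
    (hstar : ∀ γ : Fin n → ℤ, γ ≠ 0 → 0 < formQ A d γ γ →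
      (∀ j, ∃ c : ℤ, (γ j : ℚ) * formQ A d (Pi.single j 1) (Pi.single j 1)
          = (c : ℚ) * formQ A d γ γ) →
      ∃ (w : List (Fin n)) (q : Fin n), γ = actRoot A w (Pi.single q 1))
    (p q : Fin n)
    (hsh : (∀ i, (∀ k, d i ≤ d k) ↔ i = p) ∨
      (p ≠ q ∧ A p q = -1 ∧ A q p = -1 ∧ (∀ i, (∀ k, d i ≤ d k) ↔ (i = p ∨ i = q)))) :
    (∀ (w₁ w₂ : List (Fin n)) (r₁ r₂ : Fin n),
      (∀ k, d r₁ ≤ d k) → (∀ k, d r₂ ≤ d k) →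
      pairing A (actCoroot A w₁ (Pi.single r₁ 1)) (actRoot A w₂ (Pi.single r₂ 1)) = 0 →
      pairing A (actCoroot A w₂ (Pi.single r₂ 1)) (actRoot A w₁ (Pi.single r₁ 1)) = 0 →
      ∃ (w : List (Fin n)) (s : Fin n),
        actRoot A w₂ (Pi.single r₂ 1) - actRoot A w₁ (Pi.single r₁ 1)
          = actRoot A w (Pi.single s 1))
    ∧
    ¬ ∃ (w₁ w₂ : List (Fin n)) (r₁ r₂ : Fin n),
      (∀ k, d r₁ ≤ d k) ∧ (∀ k, d r₂ ≤ d k) ∧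
      pairing A (actCoroot A w₁ (Pi.single r₁ 1)) (actRoot A w₂ (Pi.single r₂ 1)) = 0 ∧
      pairing A (actCoroot A w₂ (Pi.single r₂ 1)) (actRoot A w₁ (Pi.single r₁ 1)) = 0 ∧
      ¬ ∃ (w : List (Fin n)) (s : Fin n),
        actRoot A w₂ (Pi.single r₂ 1) - actRoot A w₁ (Pi.single r₁ 1)
          = actRoot A w (Pi.single s 1) :=
  A1xA1_short_diff_is_root_doubly_general A hA d hd hind hlaced hstar p q hsh
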